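/- Let m ≥ n ≥ 2 and let G be the ordered graph on vertices v_1, ..., v_{m+n} whose only edges are v_1 v_{m+1} and v_m v_{m+n}. Color the edges of the complete graph on the linearly ordered vertex set {1, ..., 2m+n-2} by making an edge red if it has an endpoint among the first m-1 vertices, and blue otherwise. Then this coloring contains no monochromatic ordered copy of G; consequently R(G) > 2m + n - 2. -/

import Mathlib

/-- A `t`-edge-coloring `c` of the complete graph on the ordered vertex set `Fin N`
contains a monochromatic ordered copy of the ordered graph `G` on `Fin M`. -/
def HasMonoCopy {M N t : ℕ} (G : SimpleGraph (Fin M)) (c : Fin N → Fin N → Fin t) : Prop :=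
  ∃ k : Fin t, ∃ f : Fin M → Fin N, StrictMono f ∧
    ∀ u v : Fin M, u < v → G.Adj u v → c (f u) (f v) = k

/-- The `t`-color ordered Ramsey number of the ordered graph `G`: the least `N` such that
every `t`-coloring of the edges of the complete graph on `Fin N` contains a monochromatic
ordered copy of `G`. -/
noncomputable def orderedRamsey {M : ℕ} (t : ℕ) (G : SimpleGraph (Fin M)) : ℕ :=
  sInf {N : ℕ | ∀ c : Fin N → Fin N → Fin t, HasMonoCopy G c}

/-- An interval coloring of an ordered graph with `k` parts, encoded as a monotone
surjection onto `Fin k` whose fibers (the parts, which are intervals of consecutive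
vertices) are independent sets. -/
def IsIntervalColoring {N k : ℕ} (G : SimpleGraph (Fin N)) (p : Fin N → Fin k) : Prop :=
  Monotone p ∧ Function.Surjective p ∧ ∀ u v : Fin N, G.Adj u v → p u ≠ p v

/-- The interval chromatic number of an ordered graph. -/
noncomputable def intervalChromatic {N : ℕ} (G : SimpleGraph (Fin N)) : ℕ :=
  sInf {k : ℕ | ∃ p : Fin N → Fin k, IsIntervalColoring G p}

/-!
In the prefix coloring an ordered copy of `G` uses `m + n` of the `2m + n - 2` vertices, so its
first vertex lies among the first `m - 1` (the edge `v_1 v_{m+1}` is red) while its `m`-th vertex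
does not (the edge `v_m v_{m+n}` is blue).

For the bound on `R(G)` one also needs `R(G)` finite. With `L = m + n`, two of the three pairwise
crossing edges `{iL, (i+3)L}`, `i < 3`, share a color, and two equally colored edges `a b`,
`a' b'` with `a + m ≤ a' < b` and `b + n ≤ b'` extend to a monochromatic copy of `G`: put
`v_1, …, v_{m-1}` at `a, a+1, …`, `v_m` at `a'`, `v_{m+1}, …, v_{m+n-1}` at `b, b+1, …` and
`v_{m+n}` at `b'`.
-/

lemma StrictMono.fin_val_add_le {a b : ℕ} {f : Fin a → Fin b} (hf : StrictMono f) {i j : Fin a}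
    (hij : i ≤ j) : (f i : ℕ) + (j - i) ≤ f j := by
  have hcard := Finset.card_le_card_of_injOn f (t := Finset.Icc (f i) (f j))
    (fun k hk => by
      simp only [Finset.coe_Icc, Set.mem_Icc] at hk ⊢
      exact ⟨hf.monotone hk.1, hf.monotone hk.2⟩)
    (hf.injective.injOn (s := Finset.Icc i j))
  have hfij : f i ≤ f j := hf.monotone hij
  simp only [Fin.card_Icc] at hcard
  rw [Fin.le_def] at hij hfij
  omega

lemma HasMonoCopy.of_castLE {M N N' t : ℕ} {G : SimpleGraph (Fin M)}
    {c : Fin N → Fin N → Fin t} (h : N' ≤ N)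
    (hc : HasMonoCopy G fun i j => c (Fin.castLE h i) (Fin.castLE h j)) : HasMonoCopy G c :=
  let ⟨k, f, hf, hmono⟩ := hc
  ⟨k, Fin.castLE h ∘ f, (Fin.strictMono_castLE h).comp hf, hmono⟩

/-- The hypothesis `hfin` rules out the junk value `orderedRamsey t G = sInf ∅ = 0`. -/
lemma lt_orderedRamsey_of_not_hasMonoCopy {M N t : ℕ} {G : SimpleGraph (Fin M)}
    (hfin : ∃ N₀, ∀ c : Fin N₀ → Fin N₀ → Fin t, HasMonoCopy G c)
    {c : Fin N → Fin N → Fin t} (hc : ¬ HasMonoCopy G c) : N < orderedRamsey t G := by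
  by_contra! hle
  exact hc (.of_castLE hle (Nat.sInf_mem hfin _))

section CrossingPair

variable {m n : ℕ} {G : SimpleGraph (Fin (m + n))}

lemma not_hasMonoCopy_of_prefix_coloring (hm : 0 < m) (hn : 0 < n)
    (h₁ : G.Adj ⟨0, by omega⟩ ⟨m, by omega⟩) (h₂ : G.Adj ⟨m - 1, by omega⟩ ⟨m + n - 1, by omega⟩)
    {c : Fin (2 * m + n - 2) → Fin (2 * m + n - 2) → Fin 2}
    (hc : ∀ i j : Fin (2 * m + n - 2),
      c i j = if (i : ℕ) < m - 1 ∨ (j : ℕ) < m - 1 then 0 else 1) :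
    ¬ HasMonoCopy G c := by
  rintro ⟨k, f, hf, hmono⟩
  have hred := hmono _ _ (Fin.mk_lt_mk.2 hm) h₁
  have hblue := hmono _ _ (Fin.mk_lt_mk.2 (by omega)) h₂
  have h_first_last := hf.fin_val_add_le (i := ⟨0, by omega⟩) (j := ⟨m + n - 1, by omega⟩)
    (Fin.mk_le_mk.2 (by omega))
  have h_first_mid := hf.fin_val_add_le (i := ⟨0, by omega⟩) (j := ⟨m - 1, by omega⟩)
    (Fin.mk_le_mk.2 (by omega))
  have h_mid_last := hf.fin_val_add_le (i := ⟨m - 1, by omega⟩) (j := ⟨m + n - 1, by omega⟩)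
    (Fin.mk_le_mk.2 (by omega))
  dsimp only at h_first_last h_first_mid h_mid_last
  have h_last := (f ⟨m + n - 1, by omega⟩).isLt
  rw [hc, if_pos (by omega)] at hred
  rw [hc, if_neg (by omega)] at hblue
  exact absurd (hred.trans hblue.symm) (by decide)

lemma hasMonoCopy_of_crossing_pairs {t N : ℕ} (hm : 2 ≤ m) (hn : 2 ≤ n)
    (hG : ∀ u v : Fin (m + n), u < v → G.Adj u v →
      (u : ℕ) = 0 ∧ (v : ℕ) = m ∨ (u : ℕ) = m - 1 ∧ (v : ℕ) = m + n - 1)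
    (c : Fin N → Fin N → Fin t) {a a' b b' : ℕ} (ha : a + m ≤ a') (hab : a' < b)
    (hb : b + n ≤ b') (hb' : b' < N)
    (hcol : c ⟨a, by omega⟩ ⟨b, by omega⟩ = c ⟨a', by omega⟩ ⟨b', by omega⟩) :
    HasMonoCopy G c := by
  let g : ℕ → ℕ := fun i => if i < m - 1 then a + i else if i = m - 1 then a'
    else if i < m + n - 1 then b + (i - m) else b'
  have hg : ∀ i, g i < N := fun i => by dsimp only [g]; split_ifs <;> omega
  let f : Fin (m + n) → Fin N := fun i => ⟨g i, hg i⟩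
  have hf : StrictMono f := fun i j hij => by
    rw [Fin.lt_def] at hij ⊢
    have := j.isLt
    dsimp only [f, g]
    split_ifs <;> omega
  refine ⟨c ⟨a, by omega⟩ ⟨b, by omega⟩, f, hf, fun u v huv hadj => ?_⟩
  rcases hG u v huv hadj with ⟨hu, hv⟩ | ⟨hu, hv⟩
  · congr 1 <;> ext <;> simp only [f, g, hu, hv] <;> split_ifs <;> omega
  · rw [hcol]
    congr 1 <;> ext <;> simp only [f, g, hu, hv] <;> split_ifs <;> omega

lemma hasMonoCopy_of_two_coloring (hm : 2 ≤ m) (hn : 2 ≤ n)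
    (hG : ∀ u v : Fin (m + n), u < v → G.Adj u v →
      (u : ℕ) = 0 ∧ (v : ℕ) = m ∨ (u : ℕ) = m - 1 ∧ (v : ℕ) = m + n - 1)
    (c : Fin (5 * (m + n) + 1) → Fin (5 * (m + n) + 1) → Fin 2) : HasMonoCopy G c := by
  have hL : ∀ i : Fin 3, (i + 3) * (m + n) < 5 * (m + n) + 1 := fun i => by
    have := i.isLt; nlinarith
  obtain ⟨i, j, hij, hcol⟩ := Fintype.exists_ne_map_eq_of_card_lt
    (fun i : Fin 3 => c ⟨i * (m + n), by nlinarith [hL i]⟩ ⟨(i + 3) * (m + n), hL i⟩) (by simp)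
  wlog hlt : i < j generalizing i j
  · exact this j i hij.symm hcol.symm (lt_of_le_of_ne (not_lt.1 hlt) hij.symm)
  rw [Fin.lt_def] at hlt
  have := j.isLt
  exact hasMonoCopy_of_crossing_pairs hm hn hG c (by nlinarith) (by nlinarith) (by nlinarith)
    (hL j) hcol

end CrossingPair

/-- Let `m ≥ n ≥ 2` and let `G` be the ordered graph on `v_1,…,v_{m+n}` whose only
edges are `v_1 v_{m+1}` and `v_m v_{m+n}`. The coloring of the complete graph on
`{1,…,2m+n-2}` making an edge red (`0`) iff it has an endpoint among the first `m-1`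
vertices, and blue (`1`) otherwise, has no monochromatic ordered copy of `G`;
consequently `R(G) > 2m + n - 2`. -/
theorem stmt8 {m n : ℕ} (hn : 2 ≤ n) (hnm : n ≤ m)
    (G : SimpleGraph (Fin (m + n)))
    (hG : G = SimpleGraph.fromEdgeSet
      {s((⟨0, by omega⟩ : Fin (m + n)), (⟨m, by omega⟩ : Fin (m + n))),
       s((⟨m - 1, by omega⟩ : Fin (m + n)), (⟨m + n - 1, by omega⟩ : Fin (m + n)))})
    (c : Fin (2 * m + n - 2) → Fin (2 * m + n - 2) → Fin 2)
    (hc : ∀ i j : Fin (2 * m + n - 2),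
      c i j = if (i : ℕ) < m - 1 ∨ (j : ℕ) < m - 1 then 0 else 1) :
    ¬ HasMonoCopy G c ∧ 2 * m + n - 2 < orderedRamsey 2 G := by
  have hm : 2 ≤ m := hn.trans hnm
  have hadj : ∀ u v : Fin (m + n), G.Adj u v ↔
      ((u : ℕ) = 0 ∧ (v : ℕ) = m ∨ (u : ℕ) = m - 1 ∧ (v : ℕ) = m + n - 1 ∨
        (u : ℕ) = m ∧ (v : ℕ) = 0 ∨ (u : ℕ) = m + n - 1 ∧ (v : ℕ) = m - 1) := fun u v => by
    subst hG
    simp only [SimpleGraph.fromEdgeSet_adj, Set.mem_insert_iff, Set.mem_singleton_iff,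
      Sym2.eq_iff, Fin.ext_iff, ne_eq]
    omega
  have hnocopy : ¬ HasMonoCopy G c :=
    not_hasMonoCopy_of_prefix_coloring (by omega) (by omega) ((hadj _ _).2 (by simp))
      ((hadj _ _).2 (by simp)) hc
  refine ⟨hnocopy, lt_orderedRamsey_of_not_hasMonoCopy ⟨_, hasMonoCopy_of_two_coloring hm hn
    (fun u v huv h => ?_)⟩ hnocopy⟩
  rw [Fin.lt_def] at huv
  have := (hadj u v).1 h
  omega
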